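/- Let G=(V,E) be a finite simple graph on n vertices with nonempty edge set, and γ ≥ n. Then every local minimizer of f(x) = -∑_v x_v + (γ/2) xᵀ A_G x - (1/2) xᵀ A_{G'} x over [0,1]^n is the indicator vector of a maximal independent set of G. -/

import Mathlib

/-!
Along a ray `x + t • d` the objective is the quadratic `f x + t ⟪∇f x, d⟫ + t² q d`, so at a
local minimiser on the box `∂ᵥf ≥ 0` where `x v < 1` and `∂ᵥf ≤ 0` where `0 < x v`. On an edge
`uv` the direction `eᵤ - eᵥ` has curvature `q = -γ < 0`, which sharpens this to `∂ᵥf < ∂ᵤf`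
whenever `x u < 1` and `0 < x v`. Since `A_G + A_{Gᶜ} = J - I`,
`∂ᵥf = (γ + 1) (A_G x)ᵥ - ∑_{w ≠ v} x_w - 1`. For `γ ≥ n` this forces:
a fractional `x v` has a fractional neighbour (contradicting the edge inequality), two adjacent
coordinates equal to `1` give `∂ᵥf ≥ γ + 1 - n > 0`, and a zero with no neighbour in the
support gives `∂ᵥf < 0`.
-/

open scoped Classical
open Finset Matrix

/-- The dataless quadratic network objective
`f(x) = -∑_v x_v + (γ/2) xᵀ A_G x - (1/2) xᵀ A_{Gᶜ} x`. -/
noncomputable def quantNetObj {n : ℕ} (G : SimpleGraph (Fin n)) (γ : ℝ) (x : Fin n → ℝ) : ℝ :=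
  -(∑ v, x v) + γ / 2 * (x ⬝ᵥ ((G.adjMatrix ℝ) *ᵥ x)) - 1 / 2 * (x ⬝ᵥ ((Gᶜ.adjMatrix ℝ) *ᵥ x))

open Filter Topology

lemma tendsto_add_smul_nhdsGT {E : Type*} [TopologicalSpace E] [AddCommGroup E] [Module ℝ E]
    [ContinuousAdd E] [ContinuousSMul ℝ E] (x d : E) :
    Tendsto (fun t : ℝ => x + t • d) (𝓝[>] 0) (𝓝 x) := by
  have : Tendsto (fun t : ℝ => x + t • d) (𝓝 0) (𝓝 (x + (0 : ℝ) • d)) :=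
    (continuous_const.add (continuous_id.smul continuous_const)).tendsto 0
  simpa using this.mono_left nhdsWithin_le_nhds

lemma eventually_add_mul_mem_Icc {a b l u : ℝ} (ha : a ∈ Set.Icc l u) (hup : 0 < b → a < u)
    (hdown : b < 0 → l < a) : ∀ᶠ t in 𝓝[>] (0 : ℝ), a + t * b ∈ Set.Icc l u := by
  have hlim : Tendsto (fun t : ℝ => a + t * b) (𝓝[>] 0) (𝓝 a) := tendsto_add_smul_nhdsGT a b
  have hlow : ∀ᶠ t in 𝓝[>] (0 : ℝ), l ≤ a + t * b := by
    rcases lt_or_ge b 0 with hb | hb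
    · exact (hlim.eventually (lt_mem_nhds (hdown hb))).mono fun _ => le_of_lt
    · filter_upwards [self_mem_nhdsWithin] with t (ht : 0 < t)
      nlinarith [ha.1]
  have hhigh : ∀ᶠ t in 𝓝[>] (0 : ℝ), a + t * b ≤ u := by
    rcases lt_or_ge 0 b with hb | hb
    · exact (hlim.eventually (gt_mem_nhds (hup hb))).mono fun _ => le_of_lt
    · filter_upwards [self_mem_nhdsWithin] with t (ht : 0 < t)
      nlinarith [ha.2]
  exact hlow.and hhigh

lemma eventually_add_smul_mem_Icc {ι : Type*} [Finite ι] {x d l u : ι → ℝ}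
    (hx : x ∈ Set.Icc l u) (hup : ∀ i, 0 < d i → x i < u i) (hdown : ∀ i, d i < 0 → l i < x i) :
    ∀ᶠ t in 𝓝[>] (0 : ℝ), x + t • d ∈ Set.Icc l u := by
  have hcoord := fun i => eventually_add_mul_mem_Icc ⟨hx.1 i, hx.2 i⟩ (hup i) (hdown i)
  filter_upwards [eventually_all.2 hcoord] with t ht
  exact ⟨fun i => (ht i).1, fun i => (ht i).2⟩

lemma IsLocalMinOn.eventually_le_add_smul {E β : Type*} [TopologicalSpace E] [AddCommGroup E]
    [Module ℝ E] [ContinuousAdd E] [ContinuousSMul ℝ E] [Preorder β] {f : E → β} {s : Set E}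
    {x d : E} (hmin : IsLocalMinOn f s x) (hd : ∀ᶠ t in 𝓝[>] (0 : ℝ), x + t • d ∈ s) :
    ∀ᶠ t in 𝓝[>] (0 : ℝ), f x ≤ f (x + t • d) :=
  (tendsto_nhdsWithin_iff.2 ⟨tendsto_add_smul_nhdsGT x d, hd⟩).eventually hmin

lemma nonneg_of_eventually_nonneg_mul_add_sq_mul {a b : ℝ}
    (h : ∀ᶠ t in 𝓝[>] (0 : ℝ), 0 ≤ t * a + t ^ 2 * b) : 0 ≤ a ∧ (a = 0 → 0 ≤ b) := by
  have hdiv : ∀ᶠ t in 𝓝[>] (0 : ℝ), 0 ≤ a + t * b := by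
    filter_upwards [h, self_mem_nhdsWithin] with t ht (htpos : 0 < t)
    nlinarith
  have hlim : Tendsto (fun t : ℝ => a + t * b) (𝓝[>] 0) (𝓝 a) := tendsto_add_smul_nhdsGT a b
  refine ⟨ge_of_tendsto hlim hdiv, fun ha => ?_⟩
  obtain ⟨t, ht, htpos⟩ := (hdiv.and self_mem_nhdsWithin).exists
  subst ha
  nlinarith [show (0 : ℝ) < t from htpos]

lemma Matrix.IsSymm.dotProduct_mulVec_add_smul {ι R : Type*} [Fintype ι] [CommSemiring R]
    {A : Matrix ι ι R} (hA : A.IsSymm) (x d : ι → R) (t : R) :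
    (x + t • d) ⬝ᵥ A *ᵥ (x + t • d) =
      x ⬝ᵥ A *ᵥ x + 2 * t * (d ⬝ᵥ A *ᵥ x) + t ^ 2 * (d ⬝ᵥ A *ᵥ d) := by
  have hswap : x ⬝ᵥ A *ᵥ d = d ⬝ᵥ A *ᵥ x := by
    rw [dotProduct_mulVec, ← mulVec_transpose, hA.eq, dotProduct_comm]
  simp only [mulVec_add, mulVec_smul, dotProduct_add, add_dotProduct, dotProduct_smul,
    smul_dotProduct, hswap, smul_eq_mul]
  ring

noncomputable def quantNetGrad {n : ℕ} (G : SimpleGraph (Fin n)) (γ : ℝ) (x : Fin n → ℝ) :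
    Fin n → ℝ :=
  γ • (G.adjMatrix ℝ *ᵥ x) - Gᶜ.adjMatrix ℝ *ᵥ x - 1

section

variable {n : ℕ} {G : SimpleGraph (Fin n)} {γ : ℝ} {x : Fin n → ℝ}

lemma quantNetObj_add_smul (d : Fin n → ℝ) (t : ℝ) :
    quantNetObj G γ (x + t • d) = quantNetObj G γ x + t * (quantNetGrad G γ x ⬝ᵥ d) +
      t ^ 2 * (γ / 2 * (d ⬝ᵥ G.adjMatrix ℝ *ᵥ d) - 1 / 2 * (d ⬝ᵥ Gᶜ.adjMatrix ℝ *ᵥ d)) := by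
  simp only [quantNetObj, G.isSymm_adjMatrix.dotProduct_mulVec_add_smul,
    Gᶜ.isSymm_adjMatrix.dotProduct_mulVec_add_smul, Pi.add_apply, Pi.smul_apply, smul_eq_mul,
    sum_add_distrib, ← mul_sum]
  rw [quantNetGrad, sub_dotProduct, sub_dotProduct, smul_dotProduct, one_dotProduct,
    dotProduct_comm (G.adjMatrix ℝ *ᵥ x), dotProduct_comm (Gᶜ.adjMatrix ℝ *ᵥ x), smul_eq_mul]
  ring

lemma quantNetGrad_apply (v : Fin n) :
    quantNetGrad G γ x v = (γ + 1) * (G.adjMatrix ℝ *ᵥ x) v - (∑ w, x w - x v) - 1 := by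
  have hcompl := congrArg (fun A => (A *ᵥ x) v)
    (SimpleGraph.IsCompl.adjMatrix_add_adjMatrix_eq_adjMatrix_completeGraph ℝ
      (isCompl_compl (x := G)))
  simp only [add_mulVec, SimpleGraph.adjMatrix_completeGraph_eq_of_one_sub_one, sub_mulVec,
    one_mulVec] at hcompl
  have hrow : (of 1 *ᵥ x) v = ∑ w, x w := by simp [mulVec, dotProduct]
  simp only [quantNetGrad, Pi.add_apply, Pi.sub_apply, Pi.smul_apply, Pi.one_apply, smul_eq_mul,
    hrow] at hcompl ⊢
  linarith

variable {u v : Fin n}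

lemma IsLocalMinOn.quantNet_optimality (hx : x ∈ Set.Icc 0 1)
    (hmin : IsLocalMinOn (quantNetObj G γ) (Set.Icc 0 1) x) {d : Fin n → ℝ}
    (hup : ∀ i, 0 < d i → x i < 1) (hdown : ∀ i, d i < 0 → 0 < x i) :
    0 ≤ quantNetGrad G γ x ⬝ᵥ d ∧ (quantNetGrad G γ x ⬝ᵥ d = 0 →
      0 ≤ γ / 2 * (d ⬝ᵥ G.adjMatrix ℝ *ᵥ d) - 1 / 2 * (d ⬝ᵥ Gᶜ.adjMatrix ℝ *ᵥ d)) := by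
  refine nonneg_of_eventually_nonneg_mul_add_sq_mul ?_
  filter_upwards [hmin.eventually_le_add_smul (eventually_add_smul_mem_Icc hx hup hdown)] with t ht
  rw [quantNetObj_add_smul] at ht
  linarith

lemma IsLocalMinOn.quantNetGrad_nonneg (hx : x ∈ Set.Icc 0 1)
    (hmin : IsLocalMinOn (quantNetObj G γ) (Set.Icc 0 1) x) (hv : x v < 1) :
    0 ≤ quantNetGrad G γ x v := by
  have h := (hmin.quantNet_optimality hx (d := Pi.single v 1) ?_ ?_).1
  · simpa using h
  · intro i hi
    rcases eq_or_ne i v with rfl | hiv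
    · exact hv
    · simp [hiv] at hi
  · intro i hi
    rcases eq_or_ne i v with rfl | hiv
    · norm_num at hi
    · simp [hiv] at hi

lemma IsLocalMinOn.quantNetGrad_nonpos (hx : x ∈ Set.Icc 0 1)
    (hmin : IsLocalMinOn (quantNetObj G γ) (Set.Icc 0 1) x) (hv : 0 < x v) :
    quantNetGrad G γ x v ≤ 0 := by
  have h := (hmin.quantNet_optimality hx (d := Pi.single v (-1)) ?_ ?_).1
  · simpa using h
  · intro i hi
    rcases eq_or_ne i v with rfl | hiv
    · norm_num at hi
    · simp [hiv] at hi
  · intro i hi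
    rcases eq_or_ne i v with rfl | hiv
    · exact hv
    · simp [hiv] at hi

lemma IsLocalMinOn.quantNetGrad_lt_of_adj (hx : x ∈ Set.Icc 0 1)
    (hmin : IsLocalMinOn (quantNetObj G γ) (Set.Icc 0 1) x) (hγ : 0 < γ) (huv : G.Adj u v)
    (hu : x u < 1) (hv : 0 < x v) : quantNetGrad G γ x v < quantNetGrad G γ x u := by
  set d : Fin n → ℝ := Pi.single u 1 - Pi.single v 1
  have hne := huv.ne
  have hup : ∀ i, 0 < d i → x i < 1 := by
    intro i hi
    rcases eq_or_ne i u with rfl | hiu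
    · exact hu
    · rcases eq_or_ne i v with rfl | hiv
      · norm_num [d, hne] at hi
      · simp [d, hiu, hiv] at hi
  have hdown : ∀ i, d i < 0 → 0 < x i := by
    intro i hi
    rcases eq_or_ne i v with rfl | hiv
    · exact hv
    · rcases eq_or_ne i u with rfl | hiu
      · norm_num [d, hne] at hi
      · simp [d, hiu, hiv] at hi
  have hslope : quantNetGrad G γ x ⬝ᵥ d = quantNetGrad G γ x u - quantNetGrad G γ x v := by
    simp [d, dotProduct_sub]
  have hcurv :
      γ / 2 * (d ⬝ᵥ G.adjMatrix ℝ *ᵥ d) - 1 / 2 * (d ⬝ᵥ Gᶜ.adjMatrix ℝ *ᵥ d) = -γ := by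
    simp [d, mulVec_sub, dotProduct_sub, sub_dotProduct, huv, huv.symm]
    ring
  obtain ⟨hfirst, hsecond⟩ := hmin.quantNet_optimality hx hup hdown
  rw [hslope, hcurv] at hsecond
  rw [hslope] at hfirst
  rcases hfirst.lt_or_eq with h | h
  · linarith
  · linarith [hsecond h.symm]

lemma IsLocalMinOn.quantNet_eq_zero_or_eq_one (hx : x ∈ Set.Icc 0 1)
    (hmin : IsLocalMinOn (quantNetObj G γ) (Set.Icc 0 1) x) (hγ : (n : ℝ) ≤ γ) (v : Fin n) :
    x v = 0 ∨ x v = 1 := by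
  by_contra! hfrac
  have hv0 : 0 < x v := (hx.1 v).lt_of_ne' hfrac.1
  have hv1 : x v < 1 := (hx.2 v).lt_of_ne hfrac.2
  have hγpos : 0 < γ := by
    have : (1 : ℝ) ≤ n := Nat.one_le_cast.2 v.pos
    linarith
  have hgrad := le_antisymm (hmin.quantNetGrad_nonpos hx hv0) (hmin.quantNetGrad_nonneg hx hv1)
  have hbalance : (γ + 1) * (G.adjMatrix ℝ *ᵥ x) v = 1 + (∑ w, x w - x v) := by
    rw [quantNetGrad_apply] at hgrad
    linarith
  have hsum : ∑ w, x w ≤ n := by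
    simpa using sum_le_card_nsmul univ x 1 fun w _ => hx.2 w
  have hxv : x v ≤ ∑ w, x w := single_le_sum (fun w _ => hx.1 w) (mem_univ v)
  have hdeg_pos : 0 < (G.adjMatrix ℝ *ᵥ x) v := by nlinarith
  have hdeg_lt : (G.adjMatrix ℝ *ᵥ x) v < 1 := by nlinarith
  rw [SimpleGraph.adjMatrix_mulVec_apply] at hdeg_pos hdeg_lt
  obtain ⟨u, hu, hxu⟩ := exists_lt_of_sum_lt (f := fun _ => (0 : ℝ)) (by simpa using hdeg_pos)
  have hxu1 : x u < 1 := (single_le_sum (fun w _ => hx.1 w) hu).trans_lt hdeg_lt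
  have huv : G.Adj u v := (G.mem_neighborFinset v u).1 hu |>.symm
  have := hmin.quantNetGrad_lt_of_adj hx hγpos huv hxu1 hv0
  linarith [hmin.quantNetGrad_nonpos hx hxu]

lemma IsLocalMinOn.quantNet_not_adj (hx : x ∈ Set.Icc 0 1)
    (hmin : IsLocalMinOn (quantNetObj G γ) (Set.Icc 0 1) x) (hγ : (n : ℝ) ≤ γ) (hu : x u = 1)
    (hv : x v = 1) : ¬G.Adj u v := by
  intro huv
  have hgrad := hmin.quantNetGrad_nonpos hx (hv ▸ one_pos)
  rw [quantNetGrad_apply, hv] at hgrad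
  have hdeg : 1 ≤ (G.adjMatrix ℝ *ᵥ x) v := by
    rw [SimpleGraph.adjMatrix_mulVec_apply, ← hu]
    exact single_le_sum (fun w _ => hx.1 w) ((G.mem_neighborFinset v u).2 huv.symm)
  have hsum : ∑ w, x w ≤ n := by
    simpa using sum_le_card_nsmul univ x 1 fun w _ => hx.2 w
  nlinarith

lemma IsLocalMinOn.quantNet_exists_adj_pos (hx : x ∈ Set.Icc 0 1)
    (hmin : IsLocalMinOn (quantNetObj G γ) (Set.Icc 0 1) x) (hv : x v < 1) :
    ∃ w, G.Adj v w ∧ 0 < x w := by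
  by_contra! hnbr
  have hgrad := hmin.quantNetGrad_nonneg hx hv
  have hdeg : (G.adjMatrix ℝ *ᵥ x) v = 0 := by
    rw [SimpleGraph.adjMatrix_mulVec_apply]
    exact sum_eq_zero fun w hw => le_antisymm (hnbr w ((G.mem_neighborFinset v w).1 hw)) (hx.1 w)
  have hxv : x v ≤ ∑ w, x w := single_le_sum (fun w _ => hx.1 w) (mem_univ v)
  rw [quantNetGrad_apply, hdeg] at hgrad
  linarith

end

theorem stmt7_general {n : ℕ} (G : SimpleGraph (Fin n))
    (γ : ℝ) (hγ : (n : ℝ) ≤ γ) (x : Fin n → ℝ)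
    (hx : x ∈ Set.Icc (0 : Fin n → ℝ) 1)
    (hmin : IsLocalMinOn (quantNetObj G γ) (Set.Icc (0 : Fin n → ℝ) 1) x) :
    ∃ S : Finset (Fin n),
      (∀ u ∈ S, ∀ v ∈ S, ¬ G.Adj u v) ∧
      (∀ v, v ∉ S → ∃ w ∈ S, G.Adj v w) ∧
      x = fun v => if v ∈ S then (1 : ℝ) else 0 := by
  have hbin := hmin.quantNet_eq_zero_or_eq_one hx hγ
  refine ⟨univ.filter (x · = 1), ?_, ?_, ?_⟩
  · intro u hu v hv
    exact hmin.quantNet_not_adj hx hγ (mem_filter.1 hu).2 (mem_filter.1 hv).2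
  · intro v hv
    have hv0 : x v = 0 := (hbin v).resolve_right (by simpa using hv)
    obtain ⟨w, hvw, hw⟩ := hmin.quantNet_exists_adj_pos hx (hv0 ▸ one_pos)
    exact ⟨w, by simpa using (hbin w).resolve_left hw.ne', hvw⟩
  · funext v
    rcases hbin v with h | h <;> simp [h]

/-- for γ ≥ n (and G with at least one edge), every local minimizer of f
over [0,1]^n is the indicator vector of a maximal independent set of G. -/
theorem stmt7 {n : ℕ} (G : SimpleGraph (Fin n)) (hE : G.edgeSet.Nonempty)
    (γ : ℝ) (hγ : (n : ℝ) ≤ γ) (x : Fin n → ℝ)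
    (hx : x ∈ Set.Icc (0 : Fin n → ℝ) 1)
    (hmin : IsLocalMinOn (quantNetObj G γ) (Set.Icc (0 : Fin n → ℝ) 1) x) :
    ∃ S : Finset (Fin n),
      (∀ u ∈ S, ∀ v ∈ S, ¬ G.Adj u v) ∧
      (∀ v, v ∉ S → ∃ w ∈ S, G.Adj v w) ∧
      x = fun v => if v ∈ S then (1 : ℝ) else 0 :=
  stmt7_general G γ hγ x hx hmin
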